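/- arXiv:2602.07507 — 2 statements merged into one kernel-verified Lean document; each statement's English description precedes it below -/
import Mathlib

section
/- Let h : ℝ → ℝ be q-times continuously differentiable (q ≥ 1) on a compact interval T = [a,b] with midpoint c. Suppose p(t) = ∑_{j=0}^r b_j B_j^r((t−a)/(b−a)) equals the order-(q−1) Taylor polynomial of h at c for all t ∈ T (Bernstein form after affine change of variables), and |h^{(q)}| ≤ B_U on T. Then for all t ∈ T and any ρ > 0, h(t) ≤ (1/ρ) ln(∑_{j=0}^r exp(ρ b_j)) + (1/q!)((b−a)/2)^q B_U. -/
open Set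

/-!
On `[a, b]` the rescaled variable `τ = (t - a) / (b - a)` lies in `[0, 1]`, where the Bernstein
basis is nonnegative and sums to `1`; so the Bernstein form is a convex combination of the `b_j`,
hence at most `max b_j ≤ (1/ρ) log ∑ exp (ρ b_j)`. The Bernstein form is the Taylor polynomial at
the midpoint `c`, and by the Lagrange remainder `h` exceeds it by at most
`B_U |t - c|^q / q! ≤ B_U ((b - a) / 2)^q / q!`.
-/

/-- Bernstein basis polynomial of degree `r`. -/
noncomputable def bern (r j : ℕ) (τ : ℝ) : ℝ :=
  (r.choose j : ℝ) * τ ^ j * (1 - τ) ^ (r - j)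

lemma bern_eq_eval_bernsteinPolynomial (r j : ℕ) (τ : ℝ) :
    bern r j τ = (bernsteinPolynomial ℝ r j).eval τ := by
  simp [bern, bernsteinPolynomial]

lemma sum_range_bern (r : ℕ) (τ : ℝ) : ∑ j ∈ Finset.range (r + 1), bern r j τ = 1 := by
  simp only [bern_eq_eval_bernsteinPolynomial, ← Polynomial.eval_finsetSum,
    bernsteinPolynomial.sum, Polynomial.eval_one]

lemma bern_nonneg (r j : ℕ) {τ : ℝ} (hτ : τ ∈ Icc 0 1) : 0 ≤ bern r j τ := by
  obtain ⟨hτ₀, hτ₁⟩ := hτ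
  have : 0 ≤ 1 - τ := sub_nonneg.mpr hτ₁
  unfold bern
  positivity

lemma sum_mul_bern_le {r : ℕ} {τ : ℝ} (hτ : τ ∈ Icc 0 1) {bc : ℕ → ℝ} {M : ℝ}
    (hM : ∀ j ∈ Finset.range (r + 1), bc j ≤ M) :
    ∑ j ∈ Finset.range (r + 1), bc j * bern r j τ ≤ M :=
  calc ∑ j ∈ Finset.range (r + 1), bc j * bern r j τ
      ≤ ∑ j ∈ Finset.range (r + 1), M * bern r j τ :=
        Finset.sum_le_sum fun j hj => mul_le_mul_of_nonneg_right (hM j hj) (bern_nonneg r j hτ)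
    _ = M := by rw [← Finset.mul_sum, sum_range_bern, mul_one]

noncomputable def logSumExp {ι : Type*} (ρ : ℝ) (s : Finset ι) (f : ι → ℝ) : ℝ :=
  1 / ρ * Real.log (∑ i ∈ s, Real.exp (ρ * f i))

lemma le_logSumExp {ι : Type*} {ρ : ℝ} (hρ : 0 < ρ) {s : Finset ι} {f : ι → ℝ} {j : ι}
    (hj : j ∈ s) : f j ≤ logSumExp ρ s f := by
  have hexp : Real.exp (ρ * f j) ≤ ∑ i ∈ s, Real.exp (ρ * f i) :=
    Finset.single_le_sum (f := fun i => Real.exp (ρ * f i)) (fun i _ => (Real.exp_pos _).le) hj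
  have hlog : ρ * f j ≤ Real.log (∑ i ∈ s, Real.exp (ρ * f i)) :=
    (Real.le_log_iff_exp_le ((Real.exp_pos _).trans_le hexp)).mpr hexp
  rw [logSumExp, one_div_mul_eq_div, le_div_iff₀ hρ]
  linarith

lemma iteratedDerivWithin_subset {𝕜 F : Type*} [NontriviallyNormedField 𝕜]
    [NormedAddCommGroup F] [NormedSpace 𝕜 F] {f : 𝕜 → F} {s t : Set 𝕜} {n : ℕ} {x : 𝕜}
    (st : s ⊆ t) (hs : UniqueDiffOn 𝕜 s) (ht : UniqueDiffOn 𝕜 t) (hf : ContDiffOn 𝕜 n f t)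
    (hx : x ∈ s) : iteratedDerivWithin n f s x = iteratedDerivWithin n f t x := by
  simp only [iteratedDerivWithin_eq_iteratedFDerivWithin,
    iteratedFDerivWithin_subset st hs ht hf hx]

lemma taylorWithinEval_subset {E : Type*} [NormedAddCommGroup E] [NormedSpace ℝ E] {f : ℝ → E}
    {s t : Set ℝ} {n : ℕ} {x₀ : ℝ}
    (st : s ⊆ t) (hs : UniqueDiffOn ℝ s) (ht : UniqueDiffOn ℝ t) (hf : ContDiffOn ℝ n f t)
    (hx₀ : x₀ ∈ s) (x : ℝ) : taylorWithinEval f n s x₀ x = taylorWithinEval f n t x₀ x := by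
  simp only [taylor_within_apply]
  refine Finset.sum_congr rfl fun k hk => ?_
  rw [iteratedDerivWithin_subset st hs ht (hf.of_le (mod_cast Finset.mem_range_succ_iff.mp hk)) hx₀]

lemma abs_sub_taylorWithinEval_le {f : ℝ → ℝ} {a b x₀ x C : ℝ} {n : ℕ}
    (hf : ContDiffOn ℝ (n + 1) f (Icc a b)) (hx₀ : x₀ ∈ Icc a b) (hx : x ∈ Icc a b)
    (hC : ∀ ξ ∈ Icc a b, |iteratedDerivWithin (n + 1) f (Icc a b) ξ| ≤ C) :
    |f x - taylorWithinEval f n (Icc a b) x₀ x| ≤ C * |x - x₀| ^ (n + 1) / (n + 1).factorial := by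
  rcases eq_or_ne x₀ x with rfl | hne
  · simp
  have hsub : uIcc x₀ x ⊆ Icc a b := uIcc_subset_Icc hx₀ hx
  obtain ⟨ξ, hξ, hrem⟩ := taylor_mean_remainder_lagrange_iteratedDeriv hne (hf.mono hsub)
  have hξ' : ξ ∈ Ioo a b :=
    ⟨(le_min hx₀.1 hx.1).trans_lt hξ.1, hξ.2.trans_le (max_le hx₀.2 hx.2)⟩
  have hab : a < b := nonempty_Ioo.mp ⟨ξ, hξ'⟩
  rw [← taylorWithinEval_subset hsub (uniqueDiffOn_uIcc hne) (uniqueDiffOn_Icc hab)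
    (hf.of_le (mod_cast n.le_succ)) left_mem_uIcc, hrem, ← iteratedDerivWithin_eq_iteratedDeriv
    (uniqueDiffOn_Icc hab) (hf.contDiffAt (Icc_mem_nhds hξ'.1 hξ'.2)) (Ioo_subset_Icc_self hξ'),
    abs_div, abs_mul, abs_pow, Nat.abs_cast]
  gcongr
  exact hC ξ (Ioo_subset_Icc_self hξ')

lemma abs_sub_taylor_sum_le {f : ℝ → ℝ} {a b x₀ x C : ℝ} {q : ℕ}
    (hf : ContDiffOn ℝ q f (Icc a b)) (hx₀ : x₀ ∈ Icc a b) (hx : x ∈ Icc a b)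
    (hC : ∀ ξ ∈ Icc a b, |iteratedDerivWithin q f (Icc a b) ξ| ≤ C) :
    |f x - ∑ i ∈ Finset.range q, iteratedDerivWithin i f (Icc a b) x₀ / i.factorial * (x - x₀) ^ i|
      ≤ C * |x - x₀| ^ q / q.factorial := by
  cases q with
  | zero => simpa using hC x hx
  | succ n =>
    convert abs_sub_taylorWithinEval_le (mod_cast hf) hx₀ hx hC using 4
    rw [taylor_within_apply]
    refine Finset.sum_congr rfl fun i _ => ?_
    rw [smul_eq_mul]
    ring

lemma abs_sub_taylor_sum_midpoint_le {f : ℝ → ℝ} {a b x C : ℝ} {q : ℕ}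
    (hf : ContDiffOn ℝ q f (Icc a b)) (hx : x ∈ Icc a b)
    (hC : ∀ ξ ∈ Icc a b, |iteratedDerivWithin q f (Icc a b) ξ| ≤ C) :
    |f x - ∑ i ∈ Finset.range q,
        iteratedDerivWithin i f (Icc a b) ((a + b) / 2) / i.factorial * (x - (a + b) / 2) ^ i|
      ≤ 1 / q.factorial * ((b - a) / 2) ^ q * C := by
  have hc : (a + b) / 2 ∈ Icc a b := ⟨by linarith [hx.1, hx.2], by linarith [hx.1, hx.2]⟩
  have hdist : |x - (a + b) / 2| ≤ (b - a) / 2 :=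
    abs_le.mpr ⟨by linarith [hx.1], by linarith [hx.2]⟩
  have hC₀ : 0 ≤ C := (abs_nonneg _).trans (hC _ hc)
  calc _ ≤ C * |x - (a + b) / 2| ^ q / q.factorial := abs_sub_taylor_sum_le hf hc hx hC
    _ ≤ C * ((b - a) / 2) ^ q / q.factorial := by gcongr
    _ = 1 / q.factorial * ((b - a) / 2) ^ q * C := by ring

theorem taylor_bernstein_upper_bound_general (q : ℕ) (r : ℕ)
    (a b : ℝ)
    (h : ℝ → ℝ) (hsmooth : ContDiffOn ℝ q h (Icc a b))
    (bc : ℕ → ℝ)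
    (hpoly : ∀ t ∈ Icc a b,
      ∑ j ∈ Finset.range (r + 1), bc j * bern r j ((t - a) / (b - a))
        = ∑ i ∈ Finset.range q,
            iteratedDerivWithin i h (Icc a b) ((a + b) / 2) / (Nat.factorial i)
              * (t - (a + b) / 2) ^ i)
    (BU : ℝ)
    (hder : ∀ ξ ∈ Icc a b, |iteratedDerivWithin q h (Icc a b) ξ| ≤ BU) :
    ∀ t ∈ Icc a b, ∀ ρ : ℝ, 0 < ρ →
      h t ≤ (1 / ρ) * Real.log (∑ j ∈ Finset.range (r + 1), Real.exp (ρ * bc j))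
            + (1 / (Nat.factorial q : ℝ)) * ((b - a) / 2) ^ q * BU := by
  intro t ht ρ hρ
  have hτ : (t - a) / (b - a) ∈ Icc 0 1 :=
    ⟨div_nonneg (by linarith [ht.1]) (by linarith [ht.1, ht.2]),
      div_le_one_of_le₀ (by linarith [ht.2]) (by linarith [ht.1, ht.2])⟩
  have hbern : ∑ j ∈ Finset.range (r + 1), bc j * bern r j ((t - a) / (b - a))
      ≤ logSumExp ρ (Finset.range (r + 1)) bc :=
    sum_mul_bern_le hτ fun j hj => le_logSumExp hρ hj
  have htaylor := abs_sub_taylor_sum_midpoint_le hsmooth ht hder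
  rw [← hpoly t ht] at htaylor
  unfold logSumExp at hbern
  linarith [(abs_le.mp htaylor).2]

/-- Validity of the smoothed Taylor–Bernstein upper bound (Theorem 1, upper bound part):
if the Bernstein form `∑ b_j B_j^r((t-a)/(b-a))` agrees on `[a,b]` with the order-`(q-1)`
Taylor polynomial of `h` at the midpoint `c = (a+b)/2`, and `|h^{(q)}| ≤ B_U` on `[a,b]`,
then for all `t ∈ [a,b]` and `ρ > 0`,
`h(t) ≤ (1/ρ) ln(∑ exp(ρ b_j)) + (1/q!)((b-a)/2)^q B_U`. -/
theorem taylor_bernstein_upper_bound (q : ℕ) (hq : 1 ≤ q) (r : ℕ)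
    (a b : ℝ) (hab : a < b)
    (h : ℝ → ℝ) (hsmooth : ContDiffOn ℝ q h (Icc a b))
    (bc : ℕ → ℝ)
    (hpoly : ∀ t ∈ Icc a b,
      ∑ j ∈ Finset.range (r + 1), bc j * bern r j ((t - a) / (b - a))
        = ∑ i ∈ Finset.range q,
            iteratedDerivWithin i h (Icc a b) ((a + b) / 2) / (Nat.factorial i)
              * (t - (a + b) / 2) ^ i)
    (BU : ℝ)
    (hder : ∀ ξ ∈ Icc a b, |iteratedDerivWithin q h (Icc a b) ξ| ≤ BU) :
    ∀ t ∈ Icc a b, ∀ ρ : ℝ, 0 < ρ →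
      h t ≤ (1 / ρ) * Real.log (∑ j ∈ Finset.range (r + 1), Real.exp (ρ * bc j))
            + (1 / (Nat.factorial q : ℝ)) * ((b - a) / 2) ^ q * BU :=
  taylor_bernstein_upper_bound_general q r a b h hsmooth bc hpoly BU hder
end

section
/- Consistency of Bernstein coefficients under interval shrinkage: let p be a polynomial of degree ≤ q−1 with p(τ) = ∑_{i=0}^{q-1} a_i (Δ(τ − 1/2))^i for parameters a_0,...,a_{q-1} ∈ ℝ and Δ > 0, and let b_j(Δ), j = 0,...,r (r ≥ q−1), be its Bernstein coefficients of degree r on [0,1]. Then as Δ → 0, b_j(Δ) → a_0 for every j. -/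
open Filter

/-- Consistency of Bernstein coefficients under interval shrinkage: for the polynomial
`p(τ) = ∑_{i<q} a_i (Δ(τ - 1/2))^i`, with power-basis coefficients
`α_l(Δ) = ∑_{i=l}^{q-1} a_i Δ^i C(i,l)(-1/2)^(i-l)` and Bernstein coefficients
`b_j(Δ) = ∑_{l=0}^{min(j,q-1)} α_l(Δ) C(j,l)/C(r,l)`, one has `b_j(Δ) → a_0` as `Δ → 0⁺`
for every `j = 0,…,r`. -/
theorem bernstein_coefficients_shrink_to_midpoint_value
    (q : ℕ) (hq : 1 ≤ q) (r : ℕ) (hr : q - 1 ≤ r) (a : ℕ → ℝ) :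
    ∀ j ≤ r,
      Tendsto
        (fun Δ : ℝ =>
          ∑ l ∈ Finset.range (min j (q - 1) + 1),
            (∑ i ∈ Finset.Icc l (q - 1),
                a i * Δ ^ i * (i.choose l : ℝ) * (-(1:ℝ)/2) ^ (i - l))
              * ((j.choose l : ℝ) / (r.choose l : ℝ)))
        (nhdsWithin 0 (Set.Ioi 0)) (nhds (a 0)) := by
  intro j hj
  set f : ℝ → ℝ := fun Δ : ℝ =>
          ∑ l ∈ Finset.range (min j (q - 1) + 1),
            (∑ i ∈ Finset.Icc l (q - 1),
                a i * Δ ^ i * (i.choose l : ℝ) * (-(1:ℝ)/2) ^ (i - l))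
              * ((j.choose l : ℝ) / (r.choose l : ℝ)) with hf
  have hcont : Continuous f := by
    apply continuous_finset_sum
    intro l _
    exact ((continuous_finset_sum _ fun i _ => by fun_prop).mul continuous_const)
  have h0 : f 0 = a 0 := by
    rw [hf]
    simp only
    rw [Finset.sum_eq_single_of_mem 0 (by simp)]
    · rw [Finset.sum_eq_single_of_mem 0 (by simp)]
      · simp
      · intro i hi hi0
        simp [zero_pow hi0]
    · intro l hl hl0
      rw [Finset.sum_eq_zero, zero_mul]
      intro i hi
      have : i ≠ 0 := by
        have := (Finset.mem_Icc.mp hi).1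
        omega
      simp [zero_pow this]
  have := (hcont.tendsto 0).mono_left (nhdsWithin_le_nhds (s := Set.Ioi (0:ℝ)))
  rwa [h0] at this
end
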